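/- arXiv:math/0612106 — 2 statements merged into one kernel-verified Lean document; each statement's English description precedes it below -/
import Mathlib

section
/- Let a : ℕ → ℂ be supported on primes p ≤ x, and for a natural number k write (∑_{p ≤ x} a(p) p^{-1/2-it})^k = ∑_{n ≤ x^k} a_{k,x}(n) n^{-1/2-it}, where a_{k,x}(n) = 0 unless n = p₁^{α₁}⋯p_r^{α_r} is a product of exactly k primes (with multiplicity) all at most x, in which case a_{k,x}(n) = (k choose α₁,…,α_r) ∏ a(p_i)^{α_i}. Then ∑_{n ≤ x^k} |a_{k,x}(n)|²/n ≤ k! (∑_{p ≤ x} |a(p)|²/p)^k. -/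
open Finset

/-- The coefficients `a_{k,x}(n)` of `(∑_{p ≤ x} a(p) p^{-s})^k`:
`a_{k,x}(n) = ∑ a(p₁)⋯a(p_k)` over ordered `k`-tuples of primes `p_i ≤ x` with
`p₁⋯p_k = n`; for `n = ∏ pᵢ^{αᵢ}` this equals the multinomial coefficient
`(k choose α₁,…,α_r)` times `∏ a(pᵢ)^{αᵢ}`.  Then
`∑_{n ≤ x^k} |a_{k,x}(n)|²/n ≤ k! (∑_{p ≤ x} |a(p)|²/p)^k`. -/
theorem stmt_4 (x k : ℕ) (a : ℕ → ℂ)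
    (ha : ∀ p : ℕ, ¬(p.Prime ∧ p ≤ x) → a p = 0)
    (A : ℕ → ℂ)
    (hA : ∀ n : ℕ, A n =
      ∑ f ∈ (Fintype.piFinset fun _ : Fin k =>
          ((Finset.range (x + 1)).filter Nat.Prime)).filter
          (fun f => ∏ i, f i = n),
        ∏ i, a (f i)) :
    ∑ n ∈ Finset.Icc 1 (x ^ k), ‖A n‖ ^ 2 / (n : ℝ) ≤
      (k.factorial : ℝ) *
        (∑ p ∈ (Finset.range (x + 1)).filter Nat.Prime,
          ‖a p‖ ^ 2 / (p : ℝ)) ^ k := by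
  set P := (Finset.range (x + 1)).filter Nat.Prime with hPdef
  set T := Fintype.piFinset fun _ : Fin k => P with hTdef
  have hprime : ∀ f ∈ T, ∀ i : Fin k, (f i).Prime := by
    intro f hf i
    exact (Finset.mem_filter.mp ((Fintype.mem_piFinset.mp hf) i)).2
  have hle : ∀ f ∈ T, ∀ i : Fin k, f i ≤ x := by
    intro f hf i
    exact Nat.lt_succ_iff.mp
      (Finset.mem_range.mp (Finset.mem_filter.mp ((Fintype.mem_piFinset.mp hf) i)).1)
  have hmaps : ∀ f ∈ T, (∏ i, f i) ∈ Finset.Icc 1 (x ^ k) := by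
    intro f hf
    refine Finset.mem_Icc.mpr ⟨?_, ?_⟩
    · exact Nat.one_le_iff_ne_zero.mpr
        (Finset.prod_ne_zero_iff.mpr fun i _ => (hprime f hf i).pos.ne')
    · calc ∏ i, f i ≤ ∏ _i : Fin k, x :=
            Finset.prod_le_prod' fun i _ => hle f hf i
        _ = x ^ k := by simp
  have hcard : ∀ n : ℕ, (T.filter fun f => ∏ i, f i = n).card ≤ k.factorial := by
    intro n
    rcases (T.filter fun f => ∏ i, f i = n).eq_empty_or_nonempty with h | ⟨f₀, hf₀⟩
    · simp [h]
    · obtain ⟨hf₀T, hf₀n⟩ := Finset.mem_filter.mp hf₀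
      have hsub : (T.filter fun f => ∏ i, f i = n) ⊆
          (Finset.univ : Finset (Equiv.Perm (Fin k))).image fun σ i => f₀ (σ i) := by
        intro g hg
        obtain ⟨hgT, hgn⟩ := Finset.mem_filter.mp hg
        have hml : (↑(List.ofFn g) : Multiset ℕ) = (↑(List.ofFn f₀) : Multiset ℕ) := by
          have h1 : ∀ y ∈ (↑(List.ofFn g) : Multiset ℕ), Prime y := by
            intro y hy
            obtain ⟨i, rfl⟩ := List.mem_ofFn.mp (Multiset.mem_coe.mp hy)
            exact (hprime g hgT i).prime
          have h2 : ∀ y ∈ (↑(List.ofFn f₀) : Multiset ℕ), Prime y := by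
            intro y hy
            obtain ⟨i, rfl⟩ := List.mem_ofFn.mp (Multiset.mem_coe.mp hy)
            exact (hprime f₀ hf₀T i).prime
          have hp : (↑(List.ofFn g) : Multiset ℕ).prod =
              (↑(List.ofFn f₀) : Multiset ℕ).prod := by
            simp only [Multiset.prod_coe, List.prod_ofFn, hgn, hf₀n]
          have := prime_factors_unique h1 h2 (hp ▸ Associated.refl _)
          exact Multiset.rel_eq.mp (this.mono fun a _ b _ h => associated_iff_eq.mp h)
        have hperm : List.Perm (List.ofFn g) (List.ofFn f₀) := Multiset.coe_eq_coe.mp hml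
        have hsorteq : g ∘ Tuple.sort g = f₀ ∘ Tuple.sort f₀ := by
          have hp2 : List.Perm (List.ofFn (g ∘ Tuple.sort g)) (List.ofFn (f₀ ∘ Tuple.sort f₀)) :=
            ((Equiv.Perm.ofFn_comp_perm _ g).trans hperm).trans
              (Equiv.Perm.ofFn_comp_perm _ f₀).symm
          exact List.ofFn_injective (List.Perm.eq_of_sortedLE
            (Tuple.monotone_sort g).sortedLE_ofFn (Tuple.monotone_sort f₀).sortedLE_ofFn hp2)
        refine Finset.mem_image.mpr ⟨Tuple.sort f₀ * (Tuple.sort g)⁻¹, Finset.mem_univ _, ?_⟩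
        funext i
        have := congrFun hsorteq ((Tuple.sort g)⁻¹ i)
        simpa using this.symm
      calc (T.filter fun f => ∏ i, f i = n).card
          ≤ ((Finset.univ : Finset (Equiv.Perm (Fin k))).image fun σ i => f₀ (σ i)).card :=
            Finset.card_le_card hsub
        _ ≤ (Finset.univ : Finset (Equiv.Perm (Fin k))).card := Finset.card_image_le
        _ = k.factorial := by simp [Finset.card_univ, Fintype.card_perm, Fintype.card_fin]
  have key : ∀ n ∈ Finset.Icc 1 (x ^ k), ‖A n‖ ^ 2 / (n : ℝ) ≤
      (k.factorial : ℝ) * ∑ f ∈ T.filter (fun f => ∏ i, f i = n),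
        ∏ i, ‖a (f i)‖ ^ 2 / (f i : ℝ) := by
    intro n hn
    have hn1 : (1 : ℕ) ≤ n := (Finset.mem_Icc.mp hn).1
    have hnpos : (0 : ℝ) < (n : ℝ) := by exact_mod_cast hn1
    have step1 : ‖A n‖ ≤
        ∑ f ∈ T.filter (fun f => ∏ i, f i = n), ∏ i, ‖a (f i)‖ := by
      rw [hA n]
      refine (norm_sum_le _ _).trans ?_
      exact Finset.sum_le_sum fun f _ => le_of_eq (norm_prod _ _)
    have step2 : ‖A n‖ ^ 2 ≤
        (k.factorial : ℝ) * ∑ f ∈ T.filter (fun f => ∏ i, f i = n),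
          (∏ i, ‖a (f i)‖) ^ 2 := by
      calc ‖A n‖ ^ 2
          ≤ (∑ f ∈ T.filter (fun f => ∏ i, f i = n), ∏ i, ‖a (f i)‖) ^ 2 := by
            refine pow_le_pow_left₀ (norm_nonneg _) step1 2
        _ ≤ (T.filter (fun f => ∏ i, f i = n)).card *
              ∑ f ∈ T.filter (fun f => ∏ i, f i = n), (∏ i, ‖a (f i)‖) ^ 2 :=
            sq_sum_le_card_mul_sum_sq
        _ ≤ _ := by
            refine mul_le_mul_of_nonneg_right ?_ ?_
            · exact_mod_cast hcard n
            · exact Finset.sum_nonneg fun f _ => sq_nonneg _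
    rw [div_le_iff₀ hnpos]
    calc ‖A n‖ ^ 2 ≤ _ := step2
      _ = ((k.factorial : ℝ) * ∑ f ∈ T.filter (fun f => ∏ i, f i = n),
            ∏ i, ‖a (f i)‖ ^ 2 / (f i : ℝ)) * n := by
          rw [mul_assoc]
          congr 1
          rw [Finset.sum_mul]
          refine Finset.sum_congr rfl fun f hf => ?_
          obtain ⟨hfT, hfn⟩ := Finset.mem_filter.mp hf
          have hfn' : (∏ i, (f i : ℝ)) = (n : ℝ) := by
            rw [← Nat.cast_prod, hfn]
          rw [Finset.prod_div_distrib, ← Finset.prod_pow, hfn',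
            div_mul_cancel₀ _ hnpos.ne']
  calc ∑ n ∈ Finset.Icc 1 (x ^ k), ‖A n‖ ^ 2 / (n : ℝ)
      ≤ ∑ n ∈ Finset.Icc 1 (x ^ k), (k.factorial : ℝ) *
          ∑ f ∈ T.filter (fun f => ∏ i, f i = n),
            ∏ i, ‖a (f i)‖ ^ 2 / (f i : ℝ) := Finset.sum_le_sum key
    _ = (k.factorial : ℝ) * ∑ n ∈ Finset.Icc 1 (x ^ k),
          ∑ f ∈ T.filter (fun f => ∏ i, f i = n),
            ∏ i, ‖a (f i)‖ ^ 2 / (f i : ℝ) := by rw [Finset.mul_sum]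
    _ = (k.factorial : ℝ) * ∑ f ∈ T, ∏ i, ‖a (f i)‖ ^ 2 / (f i : ℝ) := by
          rw [Finset.sum_fiberwise_of_maps_to hmaps]
    _ = (k.factorial : ℝ) *
          (∑ p ∈ P, ‖a p‖ ^ 2 / (p : ℝ)) ^ k := by
          rw [← Fin.prod_const, Finset.prod_univ_sum]
end

section
/- Let T be large and 2 ≤ x ≤ T, and let k be a natural number with x^k ≤ T/log T. For any complex numbers a(p) indexed by primes p ≤ x, ∫_T^{2T} |∑_{p ≤ x} a(p) p^{-1/2-it}|^{2k} dt ≪ T · k! · (∑_{p ≤ x} |a(p)|²/p)^k, with an absolute implied constant. -/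
open Complex Finset

lemma my_harmonic_le (M : ℕ) : ∑ m ∈ Finset.Icc 1 M, (1:ℝ)/m ≤ 1 + Real.log M := by
  induction M with
  | zero => simp
  | succ M ih =>
    rw [Finset.sum_Icc_succ_top (by omega)]
    rcases Nat.eq_zero_or_pos M with h | h
    · subst h; simp
    · have hM : (0:ℝ) < M := by exact_mod_cast h
      have key : (1:ℝ)/(M+1) ≤ Real.log (M+1) - Real.log M := by
        have h2 := Real.log_le_sub_one_of_pos (x := (M:ℝ)/(M+1)) (by positivity)
        rw [Real.log_div (by positivity) (by positivity)] at h2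
        have e : (M:ℝ)/(M+1) - 1 = -(1/(M+1)) := by field_simp; ring
        linarith
      push_cast
      push_cast at ih
      linarith

lemma my_sqrt_sum_le (n : ℕ) : ∑ m ∈ Finset.Icc 1 n, 1/Real.sqrt m ≤ 2 * Real.sqrt n := by
  induction n with
  | zero => simp
  | succ n ih =>
    rw [Finset.sum_Icc_succ_top (by omega)]
    have h0 : (0:ℝ) ≤ (n:ℝ) := by positivity
    have h1 : Real.sqrt n * Real.sqrt ((n:ℝ)+1) ≤ (n:ℝ) + 1/2 := by
      have h2 : (n:ℝ) * ((n:ℝ)+1) ≤ ((n:ℝ)+1/2)^2 := by nlinarith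
      have h3 := Real.sqrt_le_sqrt h2
      rw [Real.sqrt_mul h0, Real.sqrt_sq (by positivity)] at h3
      exact h3
    have hp : (0:ℝ) < Real.sqrt ((n:ℝ)+1) := Real.sqrt_pos.2 (by positivity)
    have hs : Real.sqrt ((n:ℝ)+1) * Real.sqrt ((n:ℝ)+1) = (n:ℝ)+1 :=
      Real.mul_self_sqrt (by positivity)
    have key : 1/Real.sqrt ((n:ℝ)+1) ≤ 2*Real.sqrt ((n:ℝ)+1) - 2*Real.sqrt n := by
      rw [div_le_iff₀ hp]
      nlinarith
    push_cast
    push_cast at ih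
    linarith

lemma my_log_nat_mono {a b : ℕ} (h : a ≤ b) (hb : 1 ≤ b) : Real.log a ≤ Real.log b := by
  rcases Nat.eq_zero_or_pos a with h0 | h0
  · subst h0
    simpa using Real.log_nonneg (by exact_mod_cast hb)
  · exact Real.log_le_log (by exact_mod_cast h0) (by exact_mod_cast h)

lemma my_log_gap {n m : ℕ} (hn : 1 ≤ n) (hnm : n < m) :
    ((m:ℝ) - n)/m ≤ Real.log m - Real.log n := by
  have hm : (0:ℝ) < m := by exact_mod_cast Nat.pos_of_ne_zero (by omega)
  have hn' : (0:ℝ) < n := by exact_mod_cast hn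
  have h2 := Real.log_le_sub_one_of_pos (x := (n:ℝ)/(m:ℝ)) (by positivity)
  rw [Real.log_div (by positivity) (by positivity)] at h2
  have e : ((m:ℝ) - n)/m = 1 - (n:ℝ)/m := by field_simp
  rw [e]
  linarith

lemma my_inv_dist_sum_le {N n : ℕ} (hn1 : 1 ≤ n) (hnN : n ≤ N) :
    ∑ m ∈ (Finset.Icc 1 N).erase n, 1/|(m:ℝ) - n| ≤ 2*(1 + Real.log N) := by
  have hsplit : (Finset.Icc 1 N).erase n = Finset.Icc 1 (n-1) ∪ Finset.Icc (n+1) N := by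
    ext m
    simp only [Finset.mem_erase, Finset.mem_Icc, Finset.mem_union]
    omega
  have hdisj : Disjoint (Finset.Icc 1 (n-1)) (Finset.Icc (n+1) N) := by
    rw [Finset.disjoint_left]
    intro m hm hm'
    simp only [Finset.mem_Icc] at hm hm'
    omega
  rw [hsplit, Finset.sum_union hdisj]
  have h1 : ∑ m ∈ Finset.Icc 1 (n-1), 1/|(m:ℝ) - n| ≤ 1 + Real.log N := by
    have e : ∑ m ∈ Finset.Icc 1 (n-1), 1/|(m:ℝ) - n| = ∑ j ∈ Finset.Icc 1 (n-1), (1:ℝ)/j := by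
      apply Finset.sum_nbij' (i := fun m => n - m) (j := fun j => n - j)
      · intro m hm; simp only [Finset.mem_Icc] at *; omega
      · intro m hm; simp only [Finset.mem_Icc] at *; omega
      · intro m hm; simp only [Finset.mem_Icc] at hm; omega
      · intro m hm; simp only [Finset.mem_Icc] at hm; omega
      · intro m hm
        simp only [Finset.mem_Icc] at hm
        have hc : ((n - m : ℕ):ℝ) = (n:ℝ) - m := by
          push_cast [Nat.cast_sub (by omega : m ≤ n)]; ring
        rw [hc]
        rw [abs_of_neg (by
          have : (m:ℝ) < n := by exact_mod_cast (by omega : m < n)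
          linarith)]
        congr 1
        ring
    rw [e]
    exact (my_harmonic_le (n-1)).trans (by
      have := my_log_nat_mono (a := n-1) (b := N) (by omega) (by omega)
      linarith)
  have h2 : ∑ m ∈ Finset.Icc (n+1) N, 1/|(m:ℝ) - n| ≤ 1 + Real.log N := by
    have e : ∑ m ∈ Finset.Icc (n+1) N, 1/|(m:ℝ) - n| = ∑ j ∈ Finset.Icc 1 (N-n), (1:ℝ)/j := by
      apply Finset.sum_nbij' (i := fun m => m - n) (j := fun j => j + n)
      · intro m hm; simp only [Finset.mem_Icc] at *; omega
      · intro m hm; simp only [Finset.mem_Icc] at *; omega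
      · intro m hm; simp only [Finset.mem_Icc] at hm; omega
      · intro m hm; simp only [Finset.mem_Icc] at hm; omega
      · intro m hm
        simp only [Finset.mem_Icc] at hm
        have hc : ((m - n : ℕ):ℝ) = (m:ℝ) - n := by
          push_cast [Nat.cast_sub (by omega : n ≤ m)]; ring
        rw [hc, abs_of_pos (by
          have : (n:ℝ) < m := by exact_mod_cast (by omega : n < m)
          linarith)]
    rw [e]
    refine (my_harmonic_le (N-n)).trans ?_
    rcases Nat.eq_zero_or_pos (N - n) with h0 | h0
    · rw [h0]
      simp only [Nat.cast_zero, Real.log_zero]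
      have := Real.log_nonneg (show (1:ℝ) ≤ N by exact_mod_cast hn1.trans hnN)
      linarith
    · have := my_log_nat_mono (a := N-n) (b := N) (by omega) (by omega)
      linarith
  linarith

open MeasureTheory in
lemma my_interval_integral_re {f : ℝ → ℂ} {a b : ℝ}
    (hf : IntervalIntegrable f MeasureTheory.volume a b) :
    (∫ t in a..b, (f t).re) = (∫ t in a..b, f t).re := by
  have h1 := Complex.reCLM.integral_comp_comm hf.1
  have h2 := Complex.reCLM.integral_comp_comm hf.2
  simp only [Complex.reCLM_apply] at h1 h2
  simp only [intervalIntegral, Complex.sub_re]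
  rw [h1, h2]

lemma my_osc_abs {θ : ℝ} (hθ : θ ≠ 0) (a b : ℝ) :
    ‖∫ t in a..b, Complex.exp (Complex.I * θ * t)‖ ≤ 2/|θ| := by
  have hc : (Complex.I * θ) ≠ 0 :=
    mul_ne_zero Complex.I_ne_zero (by exact_mod_cast hθ)
  rw [integral_exp_mul_complex hc]
  rw [norm_div]
  have h1 : ∀ r : ℝ, ‖Complex.exp (Complex.I * θ * r)‖ = 1 := by
    intro r
    rw [Complex.norm_exp]
    simp
  have h2 : ‖Complex.I * θ‖ = |θ| := by
    rw [norm_mul, Complex.norm_I, Complex.norm_real, Real.norm_eq_abs, one_mul]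
  rw [h2]
  gcongr
  calc ‖Complex.exp (Complex.I * θ * b) - Complex.exp (Complex.I * θ * a)‖
      ≤ ‖Complex.exp (Complex.I * θ * b)‖ +
        ‖Complex.exp (Complex.I * θ * a)‖ := by
        exact (norm_sub_le _ _)
    _ = 2 := by rw [h1, h1]; norm_num

lemma my_card_fiber_le {k : ℕ} (P : Finset ℕ) (hP : ∀ p ∈ P, p.Prime) (m : ℕ) :
    ((Fintype.piFinset (fun _ : Fin k => P)).filter (fun τ => ∏ i, τ i = m)).card
      ≤ k.factorial := by
  set s := (Fintype.piFinset (fun _ : Fin k => P)).filter (fun τ => ∏ i, τ i = m) with hs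
  rcases s.eq_empty_or_nonempty with h | ⟨τ0, hτ0⟩
  · simp [h]
  · have hmem : ∀ τ ∈ s, (List.ofFn τ).Perm (List.ofFn τ0) := by
      have key : ∀ τ ∈ s, (List.ofFn τ).Perm m.primeFactorsList := by
        intro τ hτ
        simp only [hs, Finset.mem_filter, Fintype.mem_piFinset] at hτ
        apply Nat.primeFactorsList_unique
        · rw [List.prod_ofFn]; exact hτ.2
        · intro p hp
          rw [List.mem_ofFn] at hp
          obtain ⟨i, rfl⟩ := hp
          exact hP _ (hτ.1 i)
      intro τ hτ
      exact (key τ hτ).trans (key τ0 hτ0).symm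
    have hcard : s.card ≤ ((List.ofFn τ0).permutations).toFinset.card := by
      apply Finset.card_le_card_of_injOn (fun τ => List.ofFn τ)
      · intro τ hτ
        rw [Finset.mem_coe, List.mem_toFinset, List.mem_permutations]
        exact hmem τ hτ
      · intro τ1 _ τ2 _ h
        exact List.ofFn_injective h
    calc s.card ≤ ((List.ofFn τ0).permutations).toFinset.card := hcard
      _ ≤ ((List.ofFn τ0).permutations).length := List.toFinset_card_le _
      _ = k.factorial := by rw [List.length_permutations, List.length_ofFn]

set_option maxHeartbeats 2000000 in
lemma my_key_sum {N n : ℕ} (hn1 : 1 ≤ n) (hnN : n ≤ N) :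
    (n:ℝ) * ∑ m ∈ (Finset.Icc 1 N).erase n,
        2 / (Real.sqrt n * Real.sqrt m * |Real.log m - Real.log n|) ≤
      24 * N * (1 + Real.log N) := by
  rw [Finset.mul_sum]
  have hN1 : (1:ℝ) ≤ N := by exact_mod_cast hn1.trans hnN
  have hNpos : (0:ℝ) < N := by linarith
  have hlogN : 0 ≤ Real.log N := Real.log_nonneg hN1
  have hnpos : (0:ℝ) < n := by exact_mod_cast hn1
  have hterm : ∀ m ∈ (Finset.Icc 1 N).erase n,
      (n:ℝ) * (2 / (Real.sqrt n * Real.sqrt m * |Real.log m - Real.log n|)) ≤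
        4 * Real.sqrt n * (1/Real.sqrt m) + 6 * n * (1/|(m:ℝ) - n|) + 4 := by
    intro m hm
    obtain ⟨hmn, hm1, hmN⟩ : m ≠ n ∧ 1 ≤ m ∧ m ≤ N := by
      simp only [Finset.mem_erase, Finset.mem_Icc] at hm; tauto
    have hmpos : (0:ℝ) < m := by exact_mod_cast hm1
    set sn := Real.sqrt n with hsndef
    set sm := Real.sqrt m with hsmdef
    have hsn : 0 < sn := Real.sqrt_pos.2 hnpos
    have hsm : 0 < sm := Real.sqrt_pos.2 hmpos
    have hsn2 : sn * sn = n := Real.mul_self_sqrt hnpos.le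
    have hsm2 : sm * sm = m := Real.mul_self_sqrt hmpos.le
    set Δ := |Real.log m - Real.log n| with hΔdef
    set D := |(m:ℝ) - n| with hDdef
    have hmnR : (m:ℝ) ≠ n := by exact_mod_cast hmn
    have hD : 0 < D := abs_pos.2 (sub_ne_zero.2 hmnR)
    have sqrt_le_two_sqrt : ∀ a b : ℕ, 0 < b → a ≤ 4*b →
        Real.sqrt a ≤ 2 * Real.sqrt b := by
      intro a b hb hab
      have h1 : (a:ℝ) ≤ 4*b := by exact_mod_cast hab
      calc Real.sqrt a ≤ Real.sqrt (4*b) := Real.sqrt_le_sqrt h1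
        _ = 2 * Real.sqrt b := by
            rw [show (4:ℝ)*b = 2^2*b by norm_num, Real.sqrt_mul (by positivity),
              Real.sqrt_sq (by norm_num)]
    rcases lt_or_gt_of_ne hmn with hlt | hgt
    · -- m < n
      have hΔeq : Δ = Real.log n - Real.log m := by
        rw [hΔdef, abs_of_neg (sub_neg.2 (Real.log_lt_log hmpos (by exact_mod_cast hlt)))]
        ring
      have hDeq : D = (n:ℝ) - m := by
        rw [hDdef, abs_of_neg (by
          have : (m:ℝ) < n := by exact_mod_cast hlt
          linarith)]
        ring
      have hgap : D / n ≤ Δ := by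
        rw [hΔeq, hDeq]; exact my_log_gap hm1 hlt
      have hgapD : D ≤ n * Δ := by
        rw [div_le_iff₀ hnpos] at hgap; linarith [hgap]
      have hΔpos : 0 < Δ := lt_of_lt_of_le (by positivity) hgap
      have hX : 0 < sn * sm * Δ := by positivity
      rcases le_or_gt (2*m) n with hsub | hsub
      · -- 2m ≤ n : bound by first term
        have hD2 : (n:ℝ)/2 ≤ D := by
          rw [hDeq]
          have : 2*(m:ℝ) ≤ n := by exact_mod_cast hsub
          linarith
        have hΔhalf : (1:ℝ)/2 ≤ Δ := by
          calc (1:ℝ)/2 = ((n:ℝ)/2)/n := by field_simp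
            _ ≤ D/n := by gcongr
            _ ≤ Δ := hgap
        have key : (n:ℝ) * (2 / (sn * sm * Δ)) ≤ 4 * sn * (1/sm) := by
          rw [mul_one_div, mul_div_assoc', div_le_div_iff₀ hX hsm]
          have e : 4*sn*(sn*sm*Δ) = 4*(n:ℝ)*(sm*Δ) := by rw [← hsn2]; ring
          rw [e]
          have h7 := mul_le_mul_of_nonneg_left hΔhalf (show (0:ℝ) ≤ 4*n*sm by positivity)
          have h8 : (0:ℝ) < sm := hsm
          nlinarith [h7]
        have h1 : (0:ℝ) ≤ 6 * n * (1/D) := by positivity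
        linarith
      · -- n < 2m : bound by second term
        have hsnsm : sn ≤ 2 * sm := sqrt_le_two_sqrt n m hm1 (by omega)
        have h5 : (n:ℝ) ≤ 2*(sn*sm) := by nlinarith [mul_le_mul_of_nonneg_left hsnsm hsn.le]
        have key : (n:ℝ) * (2 / (sn * sm * Δ)) ≤ 6 * n * (1/D) := by
          rw [mul_one_div, mul_div_assoc', div_le_div_iff₀ hX hD]
          have s1 := mul_le_mul_of_nonneg_left hgapD (show (0:ℝ) ≤ 2*n by positivity)
          have s2 := mul_le_mul_of_nonneg_left
            (mul_le_mul_of_nonneg_right h5 hΔpos.le)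
            (show (0:ℝ) ≤ 2*n by positivity)
          have s3 : (0:ℝ) ≤ n*(sn*sm*Δ) := by positivity
          nlinarith [s1, s2, s3]
        have h1 : (0:ℝ) ≤ 4 * sn * (1/sm) := by positivity
        linarith
    · -- n < m
      have hΔeq : Δ = Real.log m - Real.log n := by
        rw [hΔdef, abs_of_pos (sub_pos.2 (Real.log_lt_log hnpos (by exact_mod_cast hgt)))]
      have hDeq : D = (m:ℝ) - n := by
        rw [hDdef, abs_of_pos (by
          have : (n:ℝ) < m := by exact_mod_cast hgt
          linarith)]
      have hgap : D / m ≤ Δ := by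
        rw [hΔeq, hDeq]; exact my_log_gap hn1 hgt
      have hgapD : D ≤ m * Δ := by
        rw [div_le_iff₀ hmpos] at hgap; linarith [hgap]
      have hΔpos : 0 < Δ := lt_of_lt_of_le (by positivity) hgap
      have hX : 0 < sn * sm * Δ := by positivity
      rcases le_or_gt m (2*n) with hsub | hsub
      · -- m ≤ 2n : second term
        have hsmsn : sm ≤ 2 * sn := sqrt_le_two_sqrt m n hn1 (by omega)
        have h5 : (m:ℝ) ≤ 2*(sn*sm) := by nlinarith [mul_le_mul_of_nonneg_left hsmsn hsm.le]
        have key : (n:ℝ) * (2 / (sn * sm * Δ)) ≤ 6 * n * (1/D) := by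
          rw [mul_one_div, mul_div_assoc', div_le_div_iff₀ hX hD]
          have s1 := mul_le_mul_of_nonneg_left hgapD (show (0:ℝ) ≤ 2*n by positivity)
          have s2 := mul_le_mul_of_nonneg_left
            (mul_le_mul_of_nonneg_right h5 hΔpos.le)
            (show (0:ℝ) ≤ 2*n by positivity)
          have s3 : (0:ℝ) ≤ n*(sn*sm*Δ) := by positivity
          nlinarith [s1, s2, s3]
        have h1 : (0:ℝ) ≤ 4 * sn * (1/sm) := by positivity
        linarith
      · -- 2n < m : constant term
        have hD2 : (m:ℝ)/2 ≤ D := by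
          rw [hDeq]
          have : 2*(n:ℝ) ≤ m := by exact_mod_cast hsub.le
          linarith
        have hΔhalf : (1:ℝ)/2 ≤ Δ := by
          calc (1:ℝ)/2 = ((m:ℝ)/2)/m := by field_simp
            _ ≤ D/m := by gcongr
            _ ≤ Δ := hgap
        have hsnsm : sn ≤ sm := by
          rw [hsndef, hsmdef]
          exact Real.sqrt_le_sqrt (by exact_mod_cast hgt.le)
        have key : (n:ℝ) * (2 / (sn * sm * Δ)) ≤ 4 := by
          rw [mul_div_assoc', div_le_iff₀ hX]
          have h6 : (n:ℝ) ≤ sn*sm := by nlinarith [mul_le_mul_of_nonneg_left hsnsm hsn.le]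
          have s1 := mul_le_mul_of_nonneg_right h6 hΔpos.le
          have s2 := mul_le_mul_of_nonneg_left hΔhalf (show (0:ℝ) ≤ n by positivity)
          nlinarith [s1, s2]
        have h1 : (0:ℝ) ≤ 4 * sn * (1/sm) := by positivity
        have h2 : (0:ℝ) ≤ 6 * n * (1/D) := by positivity
        linarith
  calc ∑ m ∈ (Finset.Icc 1 N).erase n,
        (n:ℝ) * (2 / (Real.sqrt n * Real.sqrt m * |Real.log m - Real.log n|))
      ≤ ∑ m ∈ (Finset.Icc 1 N).erase n,
          (4 * Real.sqrt n * (1/Real.sqrt m) + 6 * n * (1/|(m:ℝ) - n|) + 4) :=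
        Finset.sum_le_sum hterm
    _ ≤ 24 * N * (1 + Real.log N) := by
        rw [Finset.sum_add_distrib, Finset.sum_add_distrib, ← Finset.mul_sum, ← Finset.mul_sum,
          Finset.sum_const]
        have hA : ∑ m ∈ (Finset.Icc 1 N).erase n, (1/Real.sqrt m) ≤ 2 * Real.sqrt N := by
          refine le_trans (Finset.sum_le_sum_of_subset_of_nonneg
            (Finset.erase_subset _ _) ?_) (my_sqrt_sum_le N)
          intro i _ _; positivity
        have hB := my_inv_dist_sum_le hn1 hnN
        have hcard : (((Finset.Icc 1 N).erase n).card : ℝ) ≤ N := by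
          have : ((Finset.Icc 1 N).erase n).card ≤ N := by
            calc ((Finset.Icc 1 N).erase n).card ≤ (Finset.Icc 1 N).card :=
                Finset.card_le_card (Finset.erase_subset _ _)
              _ = N := by rw [Nat.card_Icc]; omega
          exact_mod_cast this
        have hsqn : Real.sqrt n ≤ Real.sqrt N := Real.sqrt_le_sqrt (by exact_mod_cast hnN)
        have hsqN2 : Real.sqrt N * Real.sqrt N = N := Real.mul_self_sqrt hNpos.le
        have hsqnN : Real.sqrt n * Real.sqrt N ≤ N := by
          have := mul_le_mul_of_nonneg_right hsqn (Real.sqrt_nonneg (N:ℝ))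
          linarith
        have h1 : 4 * Real.sqrt n * ∑ m ∈ (Finset.Icc 1 N).erase n, (1/Real.sqrt m)
            ≤ 8 * N := by
          calc 4 * Real.sqrt n * ∑ m ∈ (Finset.Icc 1 N).erase n, (1/Real.sqrt m)
              ≤ 4 * Real.sqrt n * (2 * Real.sqrt N) :=
                mul_le_mul_of_nonneg_left hA (by positivity)
            _ ≤ 8 * N := by linarith
        have h2 : 6 * (n:ℝ) * ∑ m ∈ (Finset.Icc 1 N).erase n, (1/|(m:ℝ) - n|)
            ≤ 12 * N * (1 + Real.log N) := by
          have hnN' : (n:ℝ) ≤ N := by exact_mod_cast hnN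
          have hfac : (0:ℝ) ≤ 1 + Real.log N := by linarith
          calc 6 * (n:ℝ) * ∑ m ∈ (Finset.Icc 1 N).erase n, (1/|(m:ℝ) - n|)
              ≤ 6 * (n:ℝ) * (2*(1 + Real.log N)) :=
                mul_le_mul_of_nonneg_left hB (by positivity)
            _ ≤ 12 * N * (1 + Real.log N) := by nlinarith
        have h3 : (((Finset.Icc 1 N).erase n).card) • (4:ℝ) ≤ 4 * N := by
          rw [nsmul_eq_mul]
          linarith
        have h4 : (0:ℝ) ≤ N * Real.log N := mul_nonneg hNpos.le hlogN
        linarith [h1, h2, h3]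

noncomputable def myA (a : ℕ → ℂ) {k : ℕ} (σ : Fin k → ℕ) : ℂ := ∏ i, a (σ i)
def myNP {k : ℕ} (σ : Fin k → ℕ) : ℕ := ∏ i, σ i
noncomputable def myL {k : ℕ} (σ : Fin k → ℕ) : ℝ := Real.log (myNP σ)
noncomputable def myC (a : ℕ → ℂ) {k : ℕ} (σ τ : Fin k → ℕ) : ℂ :=
  myA a σ * (starRingEnd ℂ) (myA a τ) * (Real.exp (-(myL σ + myL τ)/2) : ℂ)


lemma my_diag_amgm (u v n T : ℝ) (hT : 0 ≤ T) (hn : 0 ≤ n) :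
    u * v * (1/n) * T ≤ T/2 * (u^2/n + v^2/n) := by
  have h := mul_nonneg (mul_nonneg hT (by positivity : (0:ℝ) ≤ 1/n)) (sq_nonneg (u - v))
  have h2 : T * (1/n) * (u-v)^2 = T*(u^2/n) - 2*(u*v*(1/n)*T) + T*(v^2/n) := by ring
  linarith [h, h2]

lemma my_exchange {ι : Type*} (s : Finset ι) (c : ι → ι → ℂ) (θ : ι → ι → ℝ) (A B : ℝ) :
    (∫ t in A..B, ∑ σ ∈ s, ∑ τ ∈ s, (c σ τ * Complex.exp (Complex.I * (θ σ τ : ℝ) * t)).re)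
      = ∑ σ ∈ s, ∑ τ ∈ s, ∫ t in A..B,
          (c σ τ * Complex.exp (Complex.I * (θ σ τ : ℝ) * t)).re := by
  have hic : ∀ σ τ : ι, IntervalIntegrable
      (fun u : ℝ => (c σ τ * Complex.exp (Complex.I * (θ σ τ : ℝ) * u)).re)
      MeasureTheory.volume A B := by
    intro σ τ
    apply Continuous.intervalIntegrable
    apply Complex.continuous_re.comp
    exact continuous_const.mul (Complex.continuous_exp.comp
      (continuous_const.mul Complex.continuous_ofReal))
  have hic2 : ∀ σ : ι, IntervalIntegrable
      (fun u : ℝ => ∑ τ ∈ s, (c σ τ * Complex.exp (Complex.I * (θ σ τ : ℝ) * u)).re)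
      MeasureTheory.volume A B := by
    intro σ
    have h3 := IntervalIntegrable.sum (μ := MeasureTheory.volume) (a := A) (b := B) s
      (f := fun τ (u:ℝ) => (c σ τ * Complex.exp (Complex.I * (θ σ τ : ℝ) * u)).re)
      (fun τ _ => hic σ τ)
    have h4 : (∑ τ ∈ s, fun u : ℝ => (c σ τ * Complex.exp (Complex.I * (θ σ τ : ℝ) * u)).re)
        = fun u : ℝ => ∑ τ ∈ s, (c σ τ * Complex.exp (Complex.I * (θ σ τ : ℝ) * u)).re := by
      ext u
      simp [Finset.sum_apply]
    rwa [h4] at h3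
  exact (intervalIntegral.integral_finset_sum (s := s)
      (f := fun σ u => ∑ τ ∈ s, (c σ τ * Complex.exp (Complex.I * (θ σ τ : ℝ) * u)).re)
      (fun σ _ => hic2 σ)).trans
    (Finset.sum_congr rfl (fun σ _ => intervalIntegral.integral_finset_sum
      (fun τ _ => hic σ τ)))

lemma my_term_bound (c : ℂ) (θ A B : ℝ) (hAB : 0 ≤ B - A) :
    (∫ t in A..B, (c * Complex.exp (Complex.I * θ * t)).re)
      ≤ ‖c‖ * (if θ = 0 then (B - A) else 2/|θ|) := by
  by_cases hθ : θ = 0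
  · rw [if_pos hθ, hθ]
    simp only [Complex.ofReal_zero, mul_zero, zero_mul, Complex.exp_zero, mul_one]
    rw [intervalIntegral.integral_const, smul_eq_mul]
    nlinarith [Complex.re_le_norm c, norm_nonneg c]
  · rw [if_neg hθ]
    have hcont : Continuous (fun t : ℝ => c * Complex.exp (Complex.I * θ * t)) :=
      continuous_const.mul (Complex.continuous_exp.comp
        (continuous_const.mul Complex.continuous_ofReal))
    rw [my_interval_integral_re (hcont.intervalIntegrable _ _)]
    calc (∫ t in A..B, c * Complex.exp (Complex.I * (θ:ℝ) * (t:ℝ))).re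
        ≤ ‖∫ t in A..B, c * Complex.exp (Complex.I * (θ:ℝ) * (t:ℝ))‖ :=
          Complex.re_le_norm _
      _ = ‖c‖ * ‖∫ t in A..B, Complex.exp (Complex.I * (θ:ℝ) * (t:ℝ))‖ := by
          rw [intervalIntegral.integral_const_mul, norm_mul]
      _ ≤ ‖c‖ * (2/|θ|) :=
          mul_le_mul_of_nonneg_left (my_osc_abs hθ A B) (norm_nonneg c)

set_option maxHeartbeats 4000000 in
/-- Mean value estimate (Lemma 3): there are absolute constants `C, T₀` such that
for `T ≥ T₀`, `2 ≤ x ≤ T`, `k` a natural number with `x^k ≤ T / log T`, and any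
complex coefficients `a(p)` on primes `p ≤ x`,
`∫_T^{2T} |∑_{p ≤ x} a(p) p^{-1/2 - it}|^{2k} dt ≤ C · T · k! · (∑_{p ≤ x} |a(p)|²/p)^k`. -/
theorem stmt_6 :
    ∃ C T₀ : ℝ, 0 < C ∧ ∀ T : ℝ, T₀ ≤ T → ∀ x : ℝ, 2 ≤ x → x ≤ T →
      ∀ k : ℕ, 0 < k → x ^ (k : ℝ) ≤ T / Real.log T → ∀ a : ℕ → ℂ,
      (∫ t in T..(2 * T),
          ‖∑ p ∈ (Finset.range (Nat.floor x + 1)).filter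
              (fun p : ℕ => p.Prime ∧ (p : ℝ) ≤ x),
            a p * (p : ℂ) ^ (-(1 / 2 : ℂ) - Complex.I * t)‖ ^ (2 * k)) ≤
        C * T * (k.factorial : ℝ) *
          (∑ p ∈ (Finset.range (Nat.floor x + 1)).filter
              (fun p : ℕ => p.Prime ∧ (p : ℝ) ≤ x),
            ‖a p‖ ^ 2 / (p : ℝ)) ^ k := by
  refine ⟨49, 3, by norm_num, ?_⟩
  intro T hT x hx2 hxT k hk hxk a
  set P : Finset ℕ := (Finset.range (Nat.floor x + 1)).filter
    (fun p : ℕ => p.Prime ∧ (p : ℝ) ≤ x) with hPdef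
  set S : ℝ := ∑ p ∈ P, ‖a p‖ ^ 2 / (p : ℝ) with hSdef
  have hT0 : (0:ℝ) < T := by linarith
  have hlogT : 1 ≤ Real.log T := by
    have he := Real.exp_one_lt_d9
    have : Real.exp 1 ≤ T := by linarith
    calc (1:ℝ) = Real.log (Real.exp 1) := (Real.log_exp 1).symm
      _ ≤ Real.log T := Real.log_le_log (Real.exp_pos 1) this
  have hlogTpos : 0 < Real.log T := by linarith
  have hx2k : (2:ℝ) ≤ x ^ (k:ℝ) := by
    rw [Real.rpow_natCast]
    calc (2:ℝ) ≤ x := hx2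
      _ ≤ x ^ k := le_self_pow₀ (by linarith) (by omega)
  set N : ℕ := Nat.floor (T / Real.log T) with hNdef
  have hN1 : 1 ≤ N := Nat.le_floor (by push_cast; linarith)
  have hNle : (N:ℝ) ≤ T / Real.log T := Nat.floor_le (by linarith)
  have hNT : (N:ℝ) ≤ T := hNle.trans (div_le_self hT0.le hlogT)
  have hPprime : ∀ p ∈ P, p.Prime := by
    intro p hp; rw [hPdef, Finset.mem_filter] at hp; exact hp.2.1
  have hPx : ∀ p ∈ P, (p:ℝ) ≤ x := by
    intro p hp; rw [hPdef, Finset.mem_filter] at hp; exact hp.2.2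
  set Tup : Finset (Fin k → ℕ) := Fintype.piFinset (fun _ : Fin k => P) with hTupdef
  have hmem : ∀ σ ∈ Tup, ∀ i, σ i ∈ P := by
    intro σ hσ; rw [hTupdef, Fintype.mem_piFinset] at hσ; exact hσ
  have hnp1 : ∀ σ ∈ Tup, 1 ≤ myNP σ := by
    intro σ hσ
    apply Finset.one_le_prod'
    intro i _
    exact (hPprime _ (hmem σ hσ i)).one_lt.le
  have hnpN : ∀ σ ∈ Tup, myNP σ ≤ N := by
    intro σ hσ
    apply Nat.le_floor
    have h1 : ((myNP σ : ℕ):ℝ) = ∏ i, ((σ i : ℕ):ℝ) := by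
      rw [myNP]; push_cast; rfl
    rw [h1]
    calc ∏ i, ((σ i : ℕ):ℝ) ≤ ∏ _i : Fin k, x := by
          apply Finset.prod_le_prod
          · intro i _; positivity
          · intro i _; exact hPx _ (hmem σ hσ i)
      _ = x ^ k := by rw [Finset.prod_const, Finset.card_univ, Fintype.card_fin]
      _ = x ^ (k:ℝ) := (Real.rpow_natCast x k).symm
      _ ≤ T / Real.log T := hxk
  have hSk : ∑ σ ∈ Tup, ‖myA a σ‖ ^ 2 / (myNP σ : ℝ) = S ^ k := by
    have h1 : ∀ σ : Fin k → ℕ, ‖myA a σ‖ ^ 2 / (myNP σ : ℝ)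
        = ∏ i, (‖a (σ i)‖ ^ 2 / (σ i : ℝ)) := by
      intro σ
      rw [myA, myNP, norm_prod, ← Finset.prod_pow, Nat.cast_prod, ← Finset.prod_div_distrib]
    rw [Finset.sum_congr rfl (fun σ _ => h1 σ), hSdef, hTupdef]
    calc ∑ σ ∈ Fintype.piFinset (fun _ : Fin k => P),
          ∏ i, (‖a (σ i)‖ ^ 2 / (σ i : ℝ))
        = ∏ _i : Fin k, ∑ p ∈ P, ‖a p‖ ^ 2 / (p:ℝ) :=
          (Finset.prod_univ_sum _ (fun _ p => ‖a p‖ ^ 2 / (p:ℝ))).symm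
      _ = (∑ p ∈ P, ‖a p‖ ^ 2 / (p:ℝ)) ^ k := by
          rw [Finset.prod_const, Finset.card_univ, Fintype.card_fin]
  -- pointwise identity
  have hpoint : ∀ t : ℝ,
      ‖∑ p ∈ P, a p * (p : ℂ) ^ (-(1 / 2 : ℂ) - Complex.I * (t:ℝ))‖ ^ (2 * k)
        = ∑ σ ∈ Tup, ∑ τ ∈ Tup,
            (myC a σ τ * Complex.exp (Complex.I * ((myL τ - myL σ : ℝ):ℂ) * (t:ℝ))).re := by
    intro t
    set s : ℂ := -(1 / 2 : ℂ) - Complex.I * (t:ℝ) with hs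
    set F : ℂ := ∑ p ∈ P, a p * (p:ℂ) ^ s with hF
    have cpow_eq : ∀ p ∈ P, (p:ℂ) ^ s
        = Complex.exp (((Real.log p : ℝ):ℂ) * s) := by
      intro p hp
      have hppos : 0 < p := (hPprime p hp).pos
      have hp0 : (p:ℂ) ≠ 0 := Nat.cast_ne_zero.2 hppos.ne'
      have hlog : Complex.log ((p:ℕ):ℂ) = ((Real.log p : ℝ):ℂ) := by
        rw [← Complex.ofReal_natCast, Complex.ofReal_log (Nat.cast_nonneg p)]
      rw [Complex.cpow_def_of_ne_zero hp0, hlog]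
    have hLsum : ∀ σ ∈ Tup, ((myL σ : ℝ):ℂ) = ∑ i, ((Real.log (σ i) : ℝ):ℂ) := by
      intro σ hσ
      have h2 : Real.log ((myNP σ : ℕ):ℝ) = ∑ i, Real.log (σ i) := by
        rw [myNP, Nat.cast_prod, Real.log_prod]
        intro i _
        exact Nat.cast_ne_zero.2 (hPprime _ (hmem σ hσ i)).pos.ne'
      rw [myL, h2, Complex.ofReal_sum]
    have hFk : ∀ w : ℂ, (∑ p ∈ P, a p * (p:ℂ) ^ s) ^ k
        = ∑ σ ∈ Tup, myA a σ * Complex.exp (((myL σ : ℝ):ℂ) * s) := by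
      intro w
      have h1 : (∑ p ∈ P, a p * (p:ℂ) ^ s) ^ k
          = ∏ _i : Fin k, (∑ p ∈ P, a p * (p:ℂ) ^ s) := by
        rw [Finset.prod_const, Finset.card_univ, Fintype.card_fin]
      rw [h1, Finset.prod_univ_sum]
      apply Finset.sum_congr rfl
      intro σ hσ
      rw [Finset.prod_mul_distrib]
      congr 1
      calc ∏ i, (σ i : ℂ) ^ s
          = ∏ i, Complex.exp (((Real.log (σ i) : ℝ):ℂ) * s) :=
            Finset.prod_congr rfl (fun i _ => cpow_eq (σ i) (hmem σ hσ i))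
        _ = Complex.exp (∑ i, ((Real.log (σ i) : ℝ):ℂ) * s) := by
            rw [Complex.exp_sum]
        _ = Complex.exp (((myL σ : ℝ):ℂ) * s) := by
            rw [← Finset.sum_mul, ← hLsum σ hσ]
    have hconjFk : (starRingEnd ℂ) (F ^ k)
        = ∑ τ ∈ Tup, (starRingEnd ℂ) (myA a τ)
            * Complex.exp (((myL τ : ℝ):ℂ) * (-(1 / 2 : ℂ) + Complex.I * (t:ℝ))) := by
      rw [hF, hFk 0, map_sum]
      apply Finset.sum_congr rfl
      intro τ _
      rw [map_mul, ← Complex.exp_conj, map_mul, Complex.conj_ofReal]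
      congr 2
      rw [hs]
      simp only [map_sub, map_neg, map_mul, Complex.conj_I, Complex.conj_ofReal,
        map_div₀, map_one, map_ofNat]
      ring
    have hprod : F ^ k * (starRingEnd ℂ) (F ^ k)
        = ∑ σ ∈ Tup, ∑ τ ∈ Tup,
            myC a σ τ * Complex.exp (Complex.I * ((myL τ - myL σ : ℝ):ℂ) * (t:ℝ)) := by
      rw [hconjFk, hF, hFk 0, Finset.sum_mul_sum]
      refine Finset.sum_congr rfl (fun σ hσ => Finset.sum_congr rfl (fun τ hτ => ?_))
      have e1 : (myA a σ * Complex.exp (((myL σ : ℝ):ℂ) * s))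
            * ((starRingEnd ℂ) (myA a τ)
              * Complex.exp (((myL τ : ℝ):ℂ) * (-(1 / 2 : ℂ) + Complex.I * (t:ℝ))))
          = (myA a σ * (starRingEnd ℂ) (myA a τ))
            * (Complex.exp (((myL σ : ℝ):ℂ) * s)
              * Complex.exp (((myL τ : ℝ):ℂ) * (-(1 / 2 : ℂ) + Complex.I * (t:ℝ)))) := by
        ring
      rw [e1, ← Complex.exp_add]
      have e2 : ((myL σ : ℝ):ℂ) * s + ((myL τ : ℝ):ℂ) * (-(1 / 2 : ℂ) + Complex.I * (t:ℝ))
          = ((-(myL σ + myL τ)/2 : ℝ):ℂ) + Complex.I * ((myL τ - myL σ : ℝ):ℂ) * (t:ℝ) := by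
        rw [hs]
        push_cast
        ring
      rw [e2, Complex.exp_add, ← Complex.ofReal_exp, myC]
      ring
    have habs2 : ‖F‖ ^ (2 * k) = (F ^ k * (starRingEnd ℂ) (F ^ k)).re := by
      rw [Complex.mul_conj, Complex.ofReal_re, Complex.normSq_eq_norm_sq, norm_pow, ← pow_mul,
        mul_comm k 2]
    calc ‖∑ p ∈ P, a p * (p:ℂ) ^ s‖ ^ (2 * k)
        = (F ^ k * (starRingEnd ℂ) (F ^ k)).re := habs2
      _ = ∑ σ ∈ Tup, ∑ τ ∈ Tup,
            (myC a σ τ * Complex.exp (Complex.I * ((myL τ - myL σ : ℝ):ℂ) * (t:ℝ))).re := by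
          rw [hprod, Complex.re_sum]
          exact Finset.sum_congr rfl (fun σ _ => Complex.re_sum _ _)
  -- exchange integral and sums
  have hccont : ∀ (σ τ : Fin k → ℕ),
      Continuous (fun u : ℝ => myC a σ τ * Complex.exp (Complex.I * ((myL τ - myL σ : ℝ):ℂ) * u)) := by
    intro σ τ
    apply continuous_const.mul
    apply Complex.continuous_exp.comp
    exact continuous_const.mul Complex.continuous_ofReal
  have hexch : (∫ t in T..(2 * T),
      ‖∑ p ∈ P, a p * (p : ℂ) ^ (-(1 / 2 : ℂ) - Complex.I * (t:ℝ))‖ ^ (2 * k))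
      = ∑ σ ∈ Tup, ∑ τ ∈ Tup, ∫ t in T..(2*T),
          (myC a σ τ * Complex.exp (Complex.I * ((myL τ - myL σ : ℝ):ℂ) * (t:ℝ))).re := by
    have e1 : ∀ t ∈ Set.uIcc T (2*T), ‖∑ p ∈ P, a p * (p : ℂ) ^ (-(1 / 2 : ℂ) - Complex.I * (t:ℝ))‖ ^ (2 * k)
        = ∑ σ ∈ Tup, ∑ τ ∈ Tup,
            (myC a σ τ * Complex.exp (Complex.I * ((myL τ - myL σ : ℝ):ℂ) * (t:ℝ))).re :=
      fun t _ => hpoint t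
    have hic : ∀ σ τ : Fin k → ℕ, IntervalIntegrable
        (fun u : ℝ => (myC a σ τ * Complex.exp (Complex.I * ((myL τ - myL σ:ℝ):ℂ) * u)).re)
        MeasureTheory.volume T (2*T) :=
      fun σ τ => ((Complex.continuous_re.comp (hccont σ τ)).intervalIntegrable _ _)
    rw [intervalIntegral.integral_congr e1]
    exact my_exchange Tup (fun σ τ => myC a σ τ) (fun σ τ => myL τ - myL σ) T (2*T)
  -- per-term bound
  have hterm : ∀ σ ∈ Tup, ∀ τ ∈ Tup,
      (∫ t in T..(2*T),
          (myC a σ τ * Complex.exp (Complex.I * ((myL τ - myL σ : ℝ):ℂ) * (t:ℝ))).re)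
        ≤ ‖myC a σ τ‖ *
            (if myNP σ = myNP τ then T else 2/|myL τ - myL σ|) := by
    intro σ hσ τ hτ
    have h := my_term_bound (myC a σ τ) (myL τ - myL σ) T (2*T) (by linarith)
    have hiff : (myL τ - myL σ = 0) ↔ (myNP σ = myNP τ) := by
      constructor
      · intro h0
        have hL : myL σ = myL τ := by linarith
        have h1 : 1 ≤ myNP σ := hnp1 σ hσ
        have h2 : 1 ≤ myNP τ := hnp1 τ hτ
        by_contra hne
        rcases Nat.lt_or_ge (myNP σ) (myNP τ) with hlt | hge
        · have h3 := Real.log_lt_log (show (0:ℝ) < myNP σ by exact_mod_cast h1)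
            (show (myNP σ:ℝ) < myNP τ by exact_mod_cast hlt)
          rw [myL, myL] at hL
          linarith
        · have hgt : myNP τ < myNP σ := by omega
          have h3 := Real.log_lt_log (show (0:ℝ) < myNP τ by exact_mod_cast h2)
            (show (myNP τ:ℝ) < myNP σ by exact_mod_cast hgt)
          rw [myL, myL] at hL
          linarith
      · intro h0
        rw [myL, myL, h0]
        ring
    by_cases hc : myNP σ = myNP τ
    · rw [if_pos hc]
      rw [if_pos (hiff.2 hc), show 2*T - T = T by ring] at h
      exact h
    · rw [if_neg hc]
      rw [if_neg (fun h0 => hc (hiff.1 h0))] at h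
      exact h
  -- assemble
  have hfib : ∀ m : ℕ, (Tup.filter (fun τ => myNP τ = m)).card ≤ k.factorial := by
    intro m
    rw [hTupdef]
    exact my_card_fiber_le P hPprime m
  have h24T : 24 * (N:ℝ) * (1 + Real.log N) ≤ 48 * T := by
    have hN0 : (0:ℝ) < N := by exact_mod_cast hN1
    have hlogN : Real.log N ≤ Real.log T := Real.log_le_log hN0 hNT
    have hlognn : 0 ≤ Real.log N := Real.log_nonneg (by exact_mod_cast hN1)
    have h1 : 1 + Real.log N ≤ 2 * Real.log T := by linarith
    have h2 : (0:ℝ) ≤ 1 + Real.log N := by linarith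
    calc 24 * (N:ℝ) * (1 + Real.log N)
        ≤ 24 * (T / Real.log T) * (2 * Real.log T) := by
          apply mul_le_mul (by linarith) h1 h2 (by positivity)
      _ = 48 * T := by field_simp; ring
  have habsC : ∀ σ τ : Fin k → ℕ, ‖myC a σ τ‖
      = ‖myA a σ‖ * ‖myA a τ‖ * Real.exp (-(myL σ + myL τ)/2) := by
    intro σ τ
    rw [myC, norm_mul, norm_mul, Complex.norm_conj, Complex.norm_real, Real.norm_eq_abs,
      abs_of_pos (Real.exp_pos _)]
  have hexpdiag : ∀ σ ∈ Tup, Real.exp (-(myL σ + myL σ)/2) = 1/(myNP σ:ℝ) := by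
    intro σ hσ
    have h1 : (0:ℝ) < myNP σ := by exact_mod_cast hnp1 σ hσ
    rw [show -(myL σ + myL σ)/2 = -(myL σ) by ring, Real.exp_neg, myL, Real.exp_log h1, one_div]
  have hexpoff : ∀ σ ∈ Tup, ∀ τ ∈ Tup, Real.exp (-(myL σ + myL τ)/2)
      = 1/(Real.sqrt (myNP σ) * Real.sqrt (myNP τ)) := by
    intro σ hσ τ hτ
    have h1 : (0:ℝ) < myNP σ := by exact_mod_cast hnp1 σ hσ
    have h2 : (0:ℝ) < myNP τ := by exact_mod_cast hnp1 τ hτ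
    rw [show -(myL σ + myL τ)/2 = -(myL σ/2) + -(myL τ/2) by ring, Real.exp_add,
      myL, myL, ← Real.log_sqrt h1.le, ← Real.log_sqrt h2.le, Real.exp_neg, Real.exp_neg,
      Real.exp_log (Real.sqrt_pos.2 h1), Real.exp_log (Real.sqrt_pos.2 h2), ← mul_inv, one_div]
  -- termwise split
  have hsplit : ∀ σ ∈ Tup, ∀ τ ∈ Tup,
      ‖myC a σ τ‖ * (if myNP σ = myNP τ then T else 2/|myL τ - myL σ|)
      ≤ (if myNP σ = myNP τ then
            T/2 * (‖myA a σ‖^2/(myNP σ:ℝ) + ‖myA a τ‖^2/(myNP τ:ℝ))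
          else 0)
        + (if myNP σ = myNP τ then 0 else
            (‖myA a σ‖^2/2 + ‖myA a τ‖^2/2) *
              (2/(Real.sqrt (myNP σ) * Real.sqrt (myNP τ)
                * |Real.log (myNP τ) - Real.log (myNP σ)|))) := by
    intro σ hσ τ hτ
    by_cases hc : myNP σ = myNP τ
    · rw [if_pos hc, if_pos hc, if_pos hc, add_zero, habsC]
      have hLeq : myL τ = myL σ := by rw [myL, myL, hc]
      rw [hLeq, hexpdiag σ hσ]
      have hcR : ((myNP τ:ℕ):ℝ) = ((myNP σ:ℕ):ℝ) := by rw [hc]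
      rw [hcR]
      exact my_diag_amgm _ _ _ _ hT0.le (by positivity)
    · rw [if_neg hc, if_neg hc, if_neg hc, zero_add, habsC, hexpoff σ hσ τ hτ]
      have e3 : |myL τ - myL σ| = |Real.log (myNP τ) - Real.log (myNP σ)| := by
        rw [myL, myL]
      rw [e3]
      have e4 : ‖myA a σ‖ * ‖myA a τ‖
            * (1/(Real.sqrt (myNP σ) * Real.sqrt (myNP τ)))
            * (2/|Real.log (myNP τ) - Real.log (myNP σ)|)
          = (‖myA a σ‖ * ‖myA a τ‖)
            * (2/(Real.sqrt (myNP σ) * Real.sqrt (myNP τ)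
                * |Real.log (myNP τ) - Real.log (myNP σ)|)) := by
        simp only [div_eq_mul_inv, mul_inv, one_mul]
        ring
      rw [e4]
      apply mul_le_mul_of_nonneg_right
      · nlinarith [sq_nonneg (‖myA a σ‖ - ‖myA a τ‖)]
      · apply div_nonneg (by norm_num)
        exact mul_nonneg (mul_nonneg (Real.sqrt_nonneg _) (Real.sqrt_nonneg _)) (abs_nonneg _)
  -- diagonal sums
  have hone : ∀ σ ∈ Tup,
      ∑ τ ∈ Tup, (if myNP σ = myNP τ then ‖myA a σ‖^2/(myNP σ:ℝ) else 0)
        ≤ (k.factorial:ℝ) * (‖myA a σ‖^2/(myNP σ:ℝ)) := by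
    intro σ hσ
    rw [← Finset.sum_filter, Finset.sum_const, nsmul_eq_mul]
    apply mul_le_mul_of_nonneg_right _ (by positivity)
    have e : Tup.filter (fun τ => myNP σ = myNP τ) = Tup.filter (fun τ => myNP τ = myNP σ) := by
      apply Finset.filter_congr
      intro τ _
      simp [eq_comm]
    rw [e]
    exact_mod_cast hfib (myNP σ)
  have hone' : ∀ τ ∈ Tup,
      ∑ σ ∈ Tup, (if myNP σ = myNP τ then ‖myA a τ‖^2/(myNP τ:ℝ) else 0)
        ≤ (k.factorial:ℝ) * (‖myA a τ‖^2/(myNP τ:ℝ)) := by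
    intro τ hτ
    rw [← Finset.sum_filter, Finset.sum_const, nsmul_eq_mul]
    apply mul_le_mul_of_nonneg_right _ (by positivity)
    exact_mod_cast hfib (myNP τ)
  have hS1 : ∑ σ ∈ Tup, ∑ τ ∈ Tup,
      (if myNP σ = myNP τ then ‖myA a σ‖^2/(myNP σ:ℝ) else 0)
        ≤ (k.factorial:ℝ) * S^k := by
    calc ∑ σ ∈ Tup, ∑ τ ∈ Tup,
          (if myNP σ = myNP τ then ‖myA a σ‖^2/(myNP σ:ℝ) else 0)
        ≤ ∑ σ ∈ Tup, (k.factorial:ℝ) * (‖myA a σ‖^2/(myNP σ:ℝ)) :=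
          Finset.sum_le_sum hone
      _ = (k.factorial:ℝ) * S^k := by rw [← Finset.mul_sum, hSk]
  have hS2 : ∑ σ ∈ Tup, ∑ τ ∈ Tup,
      (if myNP σ = myNP τ then ‖myA a τ‖^2/(myNP τ:ℝ) else 0)
        ≤ (k.factorial:ℝ) * S^k := by
    rw [Finset.sum_comm]
    calc ∑ τ ∈ Tup, ∑ σ ∈ Tup,
          (if myNP σ = myNP τ then ‖myA a τ‖^2/(myNP τ:ℝ) else 0)
        ≤ ∑ τ ∈ Tup, (k.factorial:ℝ) * (‖myA a τ‖^2/(myNP τ:ℝ)) :=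
          Finset.sum_le_sum hone'
      _ = (k.factorial:ℝ) * S^k := by rw [← Finset.mul_sum, hSk]
  have hdiag : ∑ σ ∈ Tup, ∑ τ ∈ Tup, (if myNP σ = myNP τ then
        T/2 * (‖myA a σ‖^2/(myNP σ:ℝ) + ‖myA a τ‖^2/(myNP τ:ℝ))
      else 0) ≤ T * (k.factorial:ℝ) * S^k := by
    have hDdsplit : ∀ σ τ : Fin k → ℕ, (if myNP σ = myNP τ then
          T/2 * (‖myA a σ‖^2/(myNP σ:ℝ) + ‖myA a τ‖^2/(myNP τ:ℝ))
        else 0)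
        = T/2 * (if myNP σ = myNP τ then ‖myA a σ‖^2/(myNP σ:ℝ) else 0)
          + T/2 * (if myNP σ = myNP τ then ‖myA a τ‖^2/(myNP τ:ℝ) else 0) := by
      intro σ τ
      by_cases hc : myNP σ = myNP τ
      · rw [if_pos hc, if_pos hc, if_pos hc]; ring
      · rw [if_neg hc, if_neg hc, if_neg hc]; ring
    calc ∑ σ ∈ Tup, ∑ τ ∈ Tup, (if myNP σ = myNP τ then
            T/2 * (‖myA a σ‖^2/(myNP σ:ℝ) + ‖myA a τ‖^2/(myNP τ:ℝ))
          else 0)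
        = T/2 * (∑ σ ∈ Tup, ∑ τ ∈ Tup,
              (if myNP σ = myNP τ then ‖myA a σ‖^2/(myNP σ:ℝ) else 0))
          + T/2 * (∑ σ ∈ Tup, ∑ τ ∈ Tup,
              (if myNP σ = myNP τ then ‖myA a τ‖^2/(myNP τ:ℝ) else 0)) := by
          rw [Finset.sum_congr rfl (fun σ _ => Finset.sum_congr rfl (fun τ _ => hDdsplit σ τ))]
          simp only [Finset.sum_add_distrib, Finset.mul_sum]
      _ ≤ T/2 * ((k.factorial:ℝ) * S^k) + T/2 * ((k.factorial:ℝ) * S^k) := by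
          have ht2 : (0:ℝ) ≤ T/2 := by linarith
          exact add_le_add (mul_le_mul_of_nonneg_left hS1 ht2)
            (mul_le_mul_of_nonneg_left hS2 ht2)
      _ = T * (k.factorial:ℝ) * S^k := by ring
  -- off-diagonal sums
  have hI : ∀ σ ∈ Tup, ∑ τ ∈ Tup, (if myNP σ = myNP τ then 0 else
        2/(Real.sqrt (myNP σ) * Real.sqrt (myNP τ)
          * |Real.log (myNP τ) - Real.log (myNP σ)|))
      ≤ (k.factorial:ℝ) * (48*T/(myNP σ:ℝ)) := by
    intro σ hσ
    have hnσpos : (0:ℝ) < myNP σ := by exact_mod_cast hnp1 σ hσ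
    have e1 : ∑ τ ∈ Tup, (if myNP σ = myNP τ then 0 else
          2/(Real.sqrt (myNP σ) * Real.sqrt (myNP τ)
            * |Real.log (myNP τ) - Real.log (myNP σ)|))
        = ∑ τ ∈ Tup.filter (fun τ => ¬ (myNP σ = myNP τ)),
            2/(Real.sqrt (myNP σ) * Real.sqrt (myNP τ)
              * |Real.log (myNP τ) - Real.log (myNP σ)|) := by
      rw [Finset.sum_filter]
      apply Finset.sum_congr rfl
      intro τ _
      by_cases hc : myNP σ = myNP τ <;> simp [hc]
    rw [e1]
    have hmap : ∀ τ ∈ Tup.filter (fun τ => ¬ (myNP σ = myNP τ)),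
        myNP τ ∈ (Finset.Icc 1 N).erase (myNP σ) := by
      intro τ hτ
      rw [Finset.mem_filter] at hτ
      rw [Finset.mem_erase, Finset.mem_Icc]
      exact ⟨fun h => hτ.2 h.symm, hnp1 τ hτ.1, hnpN τ hτ.1⟩
    rw [← Finset.sum_fiberwise_of_maps_to hmap]
    have hstep : ∀ m ∈ (Finset.Icc 1 N).erase (myNP σ),
        ∑ τ ∈ (Tup.filter (fun τ => ¬(myNP σ = myNP τ))).filter (fun τ => myNP τ = m),
            2/(Real.sqrt (myNP σ) * Real.sqrt (myNP τ)
              * |Real.log (myNP τ) - Real.log (myNP σ)|)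
          ≤ (k.factorial:ℝ)
            * (2/(Real.sqrt (myNP σ) * Real.sqrt m * |Real.log m - Real.log (myNP σ)|)) := by
      intro m hm
      have e2 : ∀ τ ∈ (Tup.filter (fun τ => ¬(myNP σ = myNP τ))).filter (fun τ => myNP τ = m),
          2/(Real.sqrt (myNP σ) * Real.sqrt (myNP τ)
            * |Real.log (myNP τ) - Real.log (myNP σ)|)
          = 2/(Real.sqrt (myNP σ) * Real.sqrt m * |Real.log m - Real.log (myNP σ)|) := by
        intro τ hτ
        rw [Finset.mem_filter] at hτ
        rw [hτ.2]
      rw [Finset.sum_congr rfl e2, Finset.sum_const, nsmul_eq_mul]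
      apply mul_le_mul_of_nonneg_right
      · have hsub : (Tup.filter (fun τ => ¬(myNP σ = myNP τ))).filter (fun τ => myNP τ = m)
            ⊆ Tup.filter (fun τ => myNP τ = m) :=
          Finset.filter_subset_filter _ (Finset.filter_subset _ _)
        exact_mod_cast (Finset.card_le_card hsub).trans (hfib m)
      · apply div_nonneg (by norm_num)
        exact mul_nonneg (mul_nonneg (Real.sqrt_nonneg _) (Real.sqrt_nonneg _)) (abs_nonneg _)
    calc ∑ m ∈ (Finset.Icc 1 N).erase (myNP σ),
          ∑ τ ∈ (Tup.filter (fun τ => ¬(myNP σ = myNP τ))).filter (fun τ => myNP τ = m),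
            2/(Real.sqrt (myNP σ) * Real.sqrt (myNP τ)
              * |Real.log (myNP τ) - Real.log (myNP σ)|)
        ≤ ∑ m ∈ (Finset.Icc 1 N).erase (myNP σ), (k.factorial:ℝ)
            * (2/(Real.sqrt (myNP σ) * Real.sqrt m * |Real.log m - Real.log (myNP σ)|)) :=
          Finset.sum_le_sum hstep
      _ = (k.factorial:ℝ) * ∑ m ∈ (Finset.Icc 1 N).erase (myNP σ),
            2/(Real.sqrt (myNP σ) * Real.sqrt m * |Real.log m - Real.log (myNP σ)|) := by
          rw [Finset.mul_sum]
      _ ≤ (k.factorial:ℝ) * (48*T/(myNP σ:ℝ)) := by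
          apply mul_le_mul_of_nonneg_left _ (by positivity)
          rw [le_div_iff₀ hnσpos]
          have hKS := my_key_sum (hnp1 σ hσ) (hnpN σ hσ)
          calc (∑ m ∈ (Finset.Icc 1 N).erase (myNP σ),
                2/(Real.sqrt (myNP σ) * Real.sqrt m * |Real.log m - Real.log (myNP σ)|))
                  * (myNP σ:ℝ)
              = (myNP σ:ℝ) * ∑ m ∈ (Finset.Icc 1 N).erase (myNP σ),
                2/(Real.sqrt (myNP σ) * Real.sqrt m * |Real.log m - Real.log (myNP σ)|) :=
                mul_comm _ _
            _ ≤ 24 * (N:ℝ) * (1 + Real.log N) := hKS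
            _ ≤ 48 * T := h24T
  have hO1 : ∑ σ ∈ Tup, ∑ τ ∈ Tup, (if myNP σ = myNP τ then 0 else
        ‖myA a σ‖^2/2 *
          (2/(Real.sqrt (myNP σ) * Real.sqrt (myNP τ)
            * |Real.log (myNP τ) - Real.log (myNP σ)|)))
      ≤ 24 * T * (k.factorial:ℝ) * S^k := by
    calc ∑ σ ∈ Tup, ∑ τ ∈ Tup, (if myNP σ = myNP τ then 0 else
            ‖myA a σ‖^2/2 *
              (2/(Real.sqrt (myNP σ) * Real.sqrt (myNP τ)
                * |Real.log (myNP τ) - Real.log (myNP σ)|)))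
        = ∑ σ ∈ Tup, ‖myA a σ‖^2/2 *
            ∑ τ ∈ Tup, (if myNP σ = myNP τ then 0 else
              2/(Real.sqrt (myNP σ) * Real.sqrt (myNP τ)
                * |Real.log (myNP τ) - Real.log (myNP σ)|)) := by
          apply Finset.sum_congr rfl
          intro σ _
          rw [Finset.mul_sum]
          apply Finset.sum_congr rfl
          intro τ _
          by_cases hc : myNP σ = myNP τ <;> simp [hc]
      _ ≤ ∑ σ ∈ Tup, ‖myA a σ‖^2/2 *
            ((k.factorial:ℝ) * (48*T/(myNP σ:ℝ))) := by
          apply Finset.sum_le_sum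
          intro σ hσ
          exact mul_le_mul_of_nonneg_left (hI σ hσ) (by positivity)
      _ = 24 * T * (k.factorial:ℝ)
            * ∑ σ ∈ Tup, ‖myA a σ‖^2/(myNP σ:ℝ) := by
          rw [Finset.mul_sum]
          apply Finset.sum_congr rfl
          intro σ _
          ring
      _ = 24 * T * (k.factorial:ℝ) * S^k := by rw [hSk]
  have hO2 : ∑ σ ∈ Tup, ∑ τ ∈ Tup, (if myNP σ = myNP τ then 0 else
        ‖myA a τ‖^2/2 *
          (2/(Real.sqrt (myNP σ) * Real.sqrt (myNP τ)
            * |Real.log (myNP τ) - Real.log (myNP σ)|)))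
      ≤ 24 * T * (k.factorial:ℝ) * S^k := by
    rw [Finset.sum_comm]
    have e5 : ∀ τ ∈ Tup, ∀ σ ∈ Tup, (if myNP σ = myNP τ then 0 else
          ‖myA a τ‖^2/2 *
            (2/(Real.sqrt (myNP σ) * Real.sqrt (myNP τ)
              * |Real.log (myNP τ) - Real.log (myNP σ)|)))
        = (if myNP τ = myNP σ then 0 else
          ‖myA a τ‖^2/2 *
            (2/(Real.sqrt (myNP τ) * Real.sqrt (myNP σ)
              * |Real.log (myNP σ) - Real.log (myNP τ)|))) := by
      intro τ _ σ _
      by_cases hc : myNP σ = myNP τ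
      · rw [if_pos hc, if_pos hc.symm]
      · rw [if_neg hc, if_neg (fun h => hc h.symm), abs_sub_comm,
          mul_comm (Real.sqrt ((myNP σ:ℕ):ℝ)) (Real.sqrt ((myNP τ:ℕ):ℝ))]
    calc ∑ τ ∈ Tup, ∑ σ ∈ Tup, (if myNP σ = myNP τ then 0 else
            ‖myA a τ‖^2/2 *
              (2/(Real.sqrt (myNP σ) * Real.sqrt (myNP τ)
                * |Real.log (myNP τ) - Real.log (myNP σ)|)))
        = ∑ τ ∈ Tup, ∑ σ ∈ Tup, (if myNP τ = myNP σ then 0 else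
            ‖myA a τ‖^2/2 *
              (2/(Real.sqrt (myNP τ) * Real.sqrt (myNP σ)
                * |Real.log (myNP σ) - Real.log (myNP τ)|))) :=
          Finset.sum_congr rfl (fun τ hτ => Finset.sum_congr rfl (fun σ hσ => e5 τ hτ σ hσ))
      _ ≤ 24 * T * (k.factorial:ℝ) * S^k := hO1
  have hoff : ∑ σ ∈ Tup, ∑ τ ∈ Tup, (if myNP σ = myNP τ then 0 else
        (‖myA a σ‖^2/2 + ‖myA a τ‖^2/2) *
          (2/(Real.sqrt (myNP σ) * Real.sqrt (myNP τ)
            * |Real.log (myNP τ) - Real.log (myNP σ)|)))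
      ≤ 48 * T * (k.factorial:ℝ) * S^k := by
    have hDosplit : ∀ σ τ : Fin k → ℕ, (if myNP σ = myNP τ then 0 else
          (‖myA a σ‖^2/2 + ‖myA a τ‖^2/2) *
            (2/(Real.sqrt (myNP σ) * Real.sqrt (myNP τ)
              * |Real.log (myNP τ) - Real.log (myNP σ)|)))
        = (if myNP σ = myNP τ then 0 else
            ‖myA a σ‖^2/2 *
              (2/(Real.sqrt (myNP σ) * Real.sqrt (myNP τ)
                * |Real.log (myNP τ) - Real.log (myNP σ)|)))
          + (if myNP σ = myNP τ then 0 else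
            ‖myA a τ‖^2/2 *
              (2/(Real.sqrt (myNP σ) * Real.sqrt (myNP τ)
                * |Real.log (myNP τ) - Real.log (myNP σ)|))) := by
      intro σ τ
      by_cases hc : myNP σ = myNP τ
      · rw [if_pos hc, if_pos hc, if_pos hc]; ring
      · rw [if_neg hc, if_neg hc, if_neg hc]; ring
    calc ∑ σ ∈ Tup, ∑ τ ∈ Tup, (if myNP σ = myNP τ then 0 else
            (‖myA a σ‖^2/2 + ‖myA a τ‖^2/2) *
              (2/(Real.sqrt (myNP σ) * Real.sqrt (myNP τ)
                * |Real.log (myNP τ) - Real.log (myNP σ)|)))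
        = (∑ σ ∈ Tup, ∑ τ ∈ Tup, (if myNP σ = myNP τ then 0 else
            ‖myA a σ‖^2/2 *
              (2/(Real.sqrt (myNP σ) * Real.sqrt (myNP τ)
                * |Real.log (myNP τ) - Real.log (myNP σ)|))))
          + (∑ σ ∈ Tup, ∑ τ ∈ Tup, (if myNP σ = myNP τ then 0 else
            ‖myA a τ‖^2/2 *
              (2/(Real.sqrt (myNP σ) * Real.sqrt (myNP τ)
                * |Real.log (myNP τ) - Real.log (myNP σ)|)))) := by
          rw [Finset.sum_congr rfl (fun σ _ => Finset.sum_congr rfl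
            (fun τ _ => hDosplit σ τ))]
          simp only [Finset.sum_add_distrib]
      _ ≤ 24 * T * (k.factorial:ℝ) * S^k + 24 * T * (k.factorial:ℝ) * S^k :=
          add_le_add hO1 hO2
      _ = 48 * T * (k.factorial:ℝ) * S^k := by ring
  rw [hexch]
  calc ∑ σ ∈ Tup, ∑ τ ∈ Tup, ∫ t in T..(2*T),
          (myC a σ τ * Complex.exp (Complex.I * ((myL τ - myL σ : ℝ):ℂ) * (t:ℝ))).re
      ≤ ∑ σ ∈ Tup, ∑ τ ∈ Tup, ‖myC a σ τ‖ *
          (if myNP σ = myNP τ then T else 2/|myL τ - myL σ|) :=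
        Finset.sum_le_sum (fun σ hσ => Finset.sum_le_sum (fun τ hτ => hterm σ hσ τ hτ))
    _ ≤ ∑ σ ∈ Tup, ∑ τ ∈ Tup,
          ((if myNP σ = myNP τ then
              T/2 * (‖myA a σ‖^2/(myNP σ:ℝ) + ‖myA a τ‖^2/(myNP τ:ℝ))
            else 0)
          + (if myNP σ = myNP τ then 0 else
              (‖myA a σ‖^2/2 + ‖myA a τ‖^2/2) *
                (2/(Real.sqrt (myNP σ) * Real.sqrt (myNP τ)
                  * |Real.log (myNP τ) - Real.log (myNP σ)|)))) :=
        Finset.sum_le_sum (fun σ hσ => Finset.sum_le_sum (fun τ hτ => hsplit σ hσ τ hτ))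
    _ = (∑ σ ∈ Tup, ∑ τ ∈ Tup, (if myNP σ = myNP τ then
            T/2 * (‖myA a σ‖^2/(myNP σ:ℝ) + ‖myA a τ‖^2/(myNP τ:ℝ))
          else 0))
        + (∑ σ ∈ Tup, ∑ τ ∈ Tup, (if myNP σ = myNP τ then 0 else
            (‖myA a σ‖^2/2 + ‖myA a τ‖^2/2) *
              (2/(Real.sqrt (myNP σ) * Real.sqrt (myNP τ)
                * |Real.log (myNP τ) - Real.log (myNP σ)|)))) := by
        simp only [Finset.sum_add_distrib]
    _ ≤ T * (k.factorial:ℝ) * S^k + 48 * T * (k.factorial:ℝ) * S^k := add_le_add hdiag hoff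
    _ = 49 * T * (k.factorial:ℝ) * S^k := by ring
end
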